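/- arXiv:1304.0864 — 6 statements merged into one kernel-verified Lean document; each statement's English description precedes it below -/
import Mathlib

section
/- Conversely, for nonzero linear constraints: if every point of Q^n satisfying a_1·x ≤ b_1 also satisfies a_2·x ≤ b_2, and a_1 ≠ 0, then there exists k > 0 such that k·a_1 = a_2 and k·b_1 ≤ b_2, or a_2 = 0 and b_2 ≥ 0. -/
open Matrix

/-!
If `a₁ ≠ 0`, the half-space `a₁ ⬝ᵥ y ≤ b₁` contains the ray `y₀ + t • d` (`t ≥ 0`) for every
direction with `a₁ ⬝ᵥ d ≤ 0`; for `a₂ ⬝ᵥ y` to stay bounded by `b₂` along it we need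
`a₂ ⬝ᵥ d ≤ 0`. Applied to `±d` with `a₁ ⬝ᵥ d = 0`, this forces `a₂ = k • a₁`, and applied to a
direction with `a₁ ⬝ᵥ d < 0` it forces `k ≥ 0`. Evaluating at a point with `a₁ ⬝ᵥ y₀ = b₁` gives
`k * b₁ ≤ b₂`; when `k = 0` the same point gives `0 ≤ b₂`.
-/

section

variable {K V : Type*} [Field K] [LinearOrder K] [IsStrictOrderedRing K]
  [AddCommGroup V] [Module K V]

lemma nonpos_of_forall_add_mul_le {c x b : K} (h : ∀ t : K, 0 ≤ t → c + t * x ≤ b) : x ≤ 0 := by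
  by_contra! hx
  have hle := h ((|b - c| + 1) / x) (by positivity)
  rw [div_mul_cancel₀ _ hx.ne'] at hle
  linarith [le_abs_self (b - c)]

lemma Module.Dual.apply_nonpos_of_halfspace_subset {f₁ f₂ : Module.Dual K V} {b₁ b₂ : K}
    {y₀ : V} (hy₀ : f₁ y₀ ≤ b₁) (h : ∀ y, f₁ y ≤ b₁ → f₂ y ≤ b₂) {d : V} (hd : f₁ d ≤ 0) :
    f₂ d ≤ 0 :=
  nonpos_of_forall_add_mul_le fun t ht ↦ by
    simpa using h (y₀ + t • d) (by simp only [map_add, map_smul, smul_eq_mul]; nlinarith)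

lemma Module.Dual.exists_nonneg_smul_eq_of_nonpos_imp_nonpos {f₁ f₂ : Module.Dual K V}
    (hf₁ : f₁ ≠ 0) (h : ∀ d, f₁ d ≤ 0 → f₂ d ≤ 0) : ∃ k : K, 0 ≤ k ∧ k • f₁ = f₂ := by
  obtain ⟨e, he⟩ := LinearMap.surjective_of_ne_zero hf₁ 1
  refine ⟨f₂ e, by simpa [he] using h (-e) (by simp [he]), LinearMap.ext fun d ↦ ?_⟩
  have hker : ∀ z, f₁ z = 0 → f₂ z = 0 := fun z hz ↦
    le_antisymm (h z hz.le) (by simpa using h (-z) (by simp [hz]))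
  have hz₂ := hker (d - f₁ d • e) (by simp [he])
  simp only [map_sub, map_smul, smul_eq_mul, sub_eq_zero] at hz₂
  simp [hz₂, mul_comm]

lemma Module.Dual.exists_nonneg_smul_eq_of_halfspace_subset {f₁ f₂ : Module.Dual K V}
    {b₁ b₂ : K} (hf₁ : f₁ ≠ 0) (h : ∀ y, f₁ y ≤ b₁ → f₂ y ≤ b₂) :
    ∃ k : K, 0 ≤ k ∧ k • f₁ = f₂ ∧ k * b₁ ≤ b₂ := by
  obtain ⟨y₀, hy₀⟩ := LinearMap.surjective_of_ne_zero hf₁ b₁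
  obtain ⟨k, hk, rfl⟩ := exists_nonneg_smul_eq_of_nonpos_imp_nonpos hf₁
    fun d ↦ apply_nonpos_of_halfspace_subset hy₀.le h
  exact ⟨k, hk, rfl, by simpa [hy₀] using h y₀ hy₀.le⟩

end

theorem constraint_inclusion_necessary (n : ℕ)
    (a₁ a₂ : Fin n → ℚ) (b₁ b₂ : ℚ) (ha₁ : a₁ ≠ 0)
    (h : ∀ y : Fin n → ℚ, a₁ ⬝ᵥ y ≤ b₁ → a₂ ⬝ᵥ y ≤ b₂) :
    (∃ k : ℚ, 0 < k ∧ k • a₁ = a₂ ∧ k * b₁ ≤ b₂) ∨ (a₂ = 0 ∧ 0 ≤ b₂) := by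
  let e := dotProductEquiv ℚ (Fin n)
  obtain ⟨k, hk, hka, hkb⟩ := Module.Dual.exists_nonneg_smul_eq_of_halfspace_subset
    (f₁ := e a₁) (f₂ := e a₂) (by simpa using ha₁) (by simpa [e] using h)
  rw [← map_smul, e.injective.eq_iff] at hka
  rcases hk.lt_or_eq with hk | rfl
  · exact Or.inl ⟨k, hk, hka, hkb⟩
  · exact Or.inr ⟨by simp [← hka], by simpa using hkb⟩
end

section
/- (Farkas' lemma, certificate existence) Let P = {x ∈ Q^n | A·x ≤ b} be a nonempty polyhedron and C = (c·x ≤ d) a constraint such that P ⊑ C. Then there exists a row vector λ ≥ 0 such that λ·A = c and λ·b ≤ d. -/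
/-!
Homogenize: if `P` is nonempty and lies in `c ⬝ᵥ x ≤ d`, then `c ⬝ᵥ x ≤ t * d` whenever `t ≥ 0`
and `A x ≤ t b` (for `t = 0`, `x` is a recession direction of `P`, and `c ⬝ᵥ x > 0` would make
`c` unbounded on `P`). So every functional that is nonpositive on the generators `(A i, b i)` and
`(0, 1)` of a cone in `Kⁿ × K` is nonpositive on `(c, d)`, and the conic Farkas lemma writes `(c, d)`
as a nonnegative combination of them. The conic Farkas lemma is proved by induction on the number
of generators: if a functional separating `c` from the other generators is positive on `a 0`,
project onto its kernel along `a 0`, separate there, and pull back.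
-/

open Matrix

section ConeFarkas

variable {K V : Type*} [Field K] [AddCommGroup V] [Module K V]

def projAlong (f : Module.Dual K V) (a : V) : V →ₗ[K] V :=
  LinearMap.id - (f a)⁻¹ • f.smulRight a

lemma projAlong_apply (f : Module.Dual K V) (a v : V) :
    projAlong f a v = v - ((f a)⁻¹ * f v) • a := by
  simp [projAlong, mul_smul]

lemma projAlong_self {f : Module.Dual K V} {a : V} (ha : f a ≠ 0) : projAlong f a a = 0 := by
  rw [projAlong_apply, inv_mul_cancel₀ ha, one_smul, sub_self]

variable [LinearOrder K] [IsStrictOrderedRing K]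

lemma exists_nonneg_sum_cons_eq_of_projAlong {m : ℕ} {f : Module.Dual K V} {a₀ c : V}
    {a : Fin m → V} (hfa : ∀ i, f (a i) ≤ 0) (hfc : 0 < f c) (hfa₀ : 0 < f a₀)
    {ν : Fin m → K} (hν : ∀ i, 0 ≤ ν i)
    (hsum : ∑ i, ν i • projAlong f a₀ (a i) = projAlong f a₀ c) :
    ∃ lam : Fin (m + 1) → K, (∀ i, 0 ≤ lam i) ∧ ∑ i, lam i • Fin.cons a₀ a i = c := by
  let μ := (f a₀)⁻¹ * (f c - f (∑ i, ν i • a i))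
  have hμ : 0 ≤ μ := by
    have : f (∑ i, ν i • a i) ≤ 0 := by
      simpa using Finset.sum_nonpos fun i _ => mul_nonpos_of_nonneg_of_nonpos (hν i) (hfa i)
    exact mul_nonneg (inv_nonneg.2 hfa₀.le) (by linarith)
  refine ⟨Fin.cons μ ν, fun i => Fin.cases hμ hν i, ?_⟩
  simp_rw [← map_smul, ← map_sum, projAlong_apply] at hsum
  rw [Fin.sum_univ_succ]
  simp only [Fin.cons_zero, Fin.cons_succ, μ]
  linear_combination (norm := module) hsum

theorem exists_dual_pos_of_not_exists_nonneg_sum_smul_eq :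
    ∀ {m : ℕ} (a : Fin m → V) (c : V),
      (¬ ∃ lam : Fin m → K, (∀ i, 0 ≤ lam i) ∧ ∑ i, lam i • a i = c) →
      ∃ f : Module.Dual K V, (∀ i, f (a i) ≤ 0) ∧ 0 < f c
  | 0, a, c, h => by
    have hc : c ≠ 0 := fun hc => h ⟨0, fun _ => le_rfl, by simp [hc]⟩
    obtain ⟨f, hf⟩ := Module.Projective.exists_dual_eq_one K hc
    exact ⟨f, fun i => i.elim0, hf ▸ one_pos⟩
  | m + 1, a, c, h => by
    obtain ⟨f, hfa, hfc⟩ := exists_dual_pos_of_not_exists_nonneg_sum_smul_eq (Fin.tail a) c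
      fun ⟨lam, hlam, hsum⟩ => h ⟨Fin.cons 0 lam, fun i => Fin.cases le_rfl hlam i,
        by simpa [Fin.sum_univ_succ, Fin.tail] using hsum⟩
    by_cases hfa₀ : f (a 0) ≤ 0
    · exact ⟨f, Fin.cases hfa₀ hfa, hfc⟩
    push Not at hfa₀
    obtain ⟨g, hga, hgc⟩ := exists_dual_pos_of_not_exists_nonneg_sum_smul_eq
      (fun i => projAlong f (a 0) (a i.succ)) (projAlong f (a 0) c) fun ⟨ν, hν, hsum⟩ =>
        h (by simpa using exists_nonneg_sum_cons_eq_of_projAlong hfa hfc hfa₀ hν hsum)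
    refine ⟨g ∘ₗ projAlong f (a 0), Fin.cases ?_ hga, hgc⟩
    simp [projAlong_self hfa₀.ne']

theorem exists_nonneg_sum_smul_eq_of_forall_dual_nonpos {m : ℕ} (a : Fin m → V) (c : V)
    (h : ∀ f : Module.Dual K V, (∀ i, f (a i) ≤ 0) → f c ≤ 0) :
    ∃ lam : Fin m → K, (∀ i, 0 ≤ lam i) ∧ ∑ i, lam i • a i = c := by
  by_contra hc
  obtain ⟨f, hfa, hfc⟩ := exists_dual_pos_of_not_exists_nonneg_sum_smul_eq a c hc
  exact (h f hfa).not_gt hfc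

end ConeFarkas

section Polyhedron

variable {K ι κ : Type*} [Field K] [Fintype ι]

lemma exists_apply_prod_eq_dotProduct_add_mul (f : Module.Dual K ((ι → K) × K)) :
    ∃ (x : ι → K) (τ : K), ∀ v s, f (v, s) = v ⬝ᵥ x + s * τ := by
  classical
  refine ⟨(dotProductEquiv K ι).symm (f ∘ₗ LinearMap.inl K _ K), f (0, 1), fun v s => ?_⟩
  have hsplit : f (v, s) = f (v, 0) + s * f (0, 1) := by
    rw [← smul_eq_mul, ← f.map_smul, ← f.map_add]
    simp
  rw [hsplit, dotProduct_comm, ← dotProductEquiv_apply_apply, LinearEquiv.apply_symm_apply]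
  rfl

variable [LinearOrder K] [IsStrictOrderedRing K] {A : Matrix κ ι K} {b : κ → K} {c : ι → K} {d : K}

lemma dotProduct_nonpos_of_mulVec_nonpos (hne : ∃ x, A *ᵥ x ≤ b)
    (hincl : ∀ x, A *ᵥ x ≤ b → c ⬝ᵥ x ≤ d) {y : ι → K} (hy : A *ᵥ y ≤ 0) : c ⬝ᵥ y ≤ 0 := by
  obtain ⟨x, hx⟩ := hne
  by_contra! hcy
  set s := (d - c ⬝ᵥ x + 1) / (c ⬝ᵥ y)
  have hs : 0 ≤ s := div_nonneg (by linarith [hincl x hx]) hcy.le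
  have hxy : A *ᵥ (x + s • y) ≤ b := by
    rw [mulVec_add, mulVec_smul]
    exact add_le_of_le_of_nonpos hx (smul_nonpos_of_nonneg_of_nonpos hs hy)
  have hsy : s * (c ⬝ᵥ y) = d - c ⬝ᵥ x + 1 := div_mul_cancel₀ _ hcy.ne'
  have := hincl _ hxy
  rw [dotProduct_add, dotProduct_smul, smul_eq_mul] at this
  linarith

lemma dotProduct_le_mul_of_mulVec_le_smul (hne : ∃ x, A *ᵥ x ≤ b)
    (hincl : ∀ x, A *ᵥ x ≤ b → c ⬝ᵥ x ≤ d) {x : ι → K} {t : K} (ht : 0 ≤ t)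
    (hx : A *ᵥ x ≤ t • b) : c ⬝ᵥ x ≤ t * d := by
  rcases ht.eq_or_lt with rfl | ht
  · simpa using dotProduct_nonpos_of_mulVec_nonpos hne hincl (by simpa using hx)
  · have := hincl (t⁻¹ • x) (by rwa [mulVec_smul, inv_smul_le_iff_of_pos ht])
    rwa [dotProduct_smul, smul_eq_mul, inv_mul_le_iff₀ ht] at this

end Polyhedron

theorem farkas_certificate_exists (n m : ℕ)
    (A : Matrix (Fin m) (Fin n) ℚ) (b : Fin m → ℚ) (c : Fin n → ℚ) (d : ℚ)
    (hne : ∃ x : Fin n → ℚ, A.mulVec x ≤ b)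
    (hincl : ∀ x : Fin n → ℚ, A.mulVec x ≤ b → c ⬝ᵥ x ≤ d) :
    ∃ lam : Fin m → ℚ, (∀ i, 0 ≤ lam i) ∧ A.vecMul lam = c ∧ lam ⬝ᵥ b ≤ d := by
  obtain ⟨lam, hlam, hsum⟩ := exists_nonneg_sum_smul_eq_of_forall_dual_nonpos
    (Fin.cons ((0 : Fin n → ℚ), (1 : ℚ)) fun i => (A i, b i)) (c, d) fun f hf => by
      obtain ⟨x, τ, hf_eq⟩ := exists_apply_prod_eq_dotProduct_add_mul f
      have hτ : τ ≤ 0 := by simpa [hf_eq] using hf 0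
      have hAx : A *ᵥ x ≤ (-τ) • b := fun i => by
        have := hf i.succ
        simp only [Fin.cons_succ, hf_eq] at this
        simp only [mulVec, Pi.smul_apply, smul_eq_mul]
        linarith
      have := dotProduct_le_mul_of_mulVec_le_smul hne hincl (neg_nonneg.2 hτ) hAx
      rw [hf_eq]
      linarith
  rw [Fin.sum_univ_succ] at hsum
  simp only [Fin.cons_zero, Fin.cons_succ, Prod.smul_mk, smul_zero, smul_eq_mul, mul_one,
    Prod.ext_iff, Prod.fst_add, Prod.snd_add, Prod.fst_sum, Prod.snd_sum, zero_add] at hsum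
  obtain ⟨hA, hb⟩ := hsum
  refine ⟨fun i => lam i.succ, fun i => hlam i.succ, by rwa [vecMul_eq_sum], ?_⟩
  rw [dotProduct]
  linarith [hlam 0]
end

section
/- (Certificate for polyhedron inclusion) Let P_1 be given by constraints C_1, ..., C_m and P_2 by constraints C'_1, ..., C'_k. If there exists a k×m matrix F with nonnegative entries such that for each row j, the combination Σ_i F_{j,i}·C_i equals a constraint (a, b) with a equal to the linear term of C'_j and b at most the bound of C'_j, then P_1 ⊑ P_2. -/
open Matrix BigOperators

theorem farkas_matrix_certificate_sound (n m k : ℕ)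
    (a : Fin m → Fin n → ℚ) (b : Fin m → ℚ)
    (a' : Fin k → Fin n → ℚ) (b' : Fin k → ℚ)
    (F : Matrix (Fin k) (Fin m) ℚ)
    (hF : ∀ j i, 0 ≤ F j i)
    (hrow : ∀ j, (∑ i, F j i • a i) = a' j ∧ (∑ i, F j i * b i) ≤ b' j) :
    ∀ x : Fin n → ℚ, (∀ i, a i ⬝ᵥ x ≤ b i) → (∀ j, a' j ⬝ᵥ x ≤ b' j) := by
  intro x hx j
  obtain ⟨ha, hb⟩ := hrow j
  have : a' j ⬝ᵥ x = ∑ i, F j i * (a i ⬝ᵥ x) := by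
    rw [← ha]
    simp only [dotProduct, Finset.sum_apply, Pi.smul_apply, smul_eq_mul,
      Finset.mul_sum, Finset.sum_mul, mul_assoc]
    rw [Finset.sum_comm]
  rw [this]
  calc ∑ i, F j i * (a i ⬝ᵥ x) ≤ ∑ i, F j i * b i :=
        Finset.sum_le_sum fun i _ => mul_le_mul_of_nonneg_left (hx i) (hF j i)
    _ ≤ b' j := hb
end

section
/- (Soundness of Fourier–Motzkin projection) Let P be a polyhedron over Q^n given by constraints partitioned into E^0 (zero coefficient on x_k), E^+ (positive coefficient) and E^- (negative coefficient). Define P_proj as E^0 together with, for each pair (C^+, C^-) ∈ E^+ × E^-, the positive combination eliminating x_k. Then P ⊑ P_proj, and no constraint of P_proj mentions x_k. -/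
open Matrix

/-- The eliminating combination of a positive and a negative constraint w.r.t. variable `k`. -/
def elimComb {n : ℕ} (k : Fin n) (Cp Cm : (Fin n → ℚ) × ℚ) : (Fin n → ℚ) × ℚ :=
  ((-(Cm.1 k)) • Cp.1 + (Cp.1 k) • Cm.1, (-(Cm.1 k)) * Cp.2 + (Cp.1 k) * Cm.2)

theorem fourier_motzkin_projection_sound (n : ℕ) (k : Fin n)
    (S : Finset ((Fin n → ℚ) × ℚ)) :
    (∀ y : Fin n → ℚ, (∀ C ∈ S, C.1 ⬝ᵥ y ≤ C.2) →
      ((∀ C ∈ S, C.1 k = 0 → C.1 ⬝ᵥ y ≤ C.2) ∧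
       (∀ Cp ∈ S, ∀ Cm ∈ S, 0 < Cp.1 k → Cm.1 k < 0 →
          (elimComb k Cp Cm).1 ⬝ᵥ y ≤ (elimComb k Cp Cm).2))) ∧
    (∀ Cp ∈ S, ∀ Cm ∈ S, 0 < Cp.1 k → Cm.1 k < 0 →
       (elimComb k Cp Cm).1 k = 0) := by
  constructor
  · intro y hy
    constructor
    · intro C hC _; exact hy C hC
    · intro Cp hCp Cm hCm hp hm
      have h1 := hy Cp hCp
      have h2 := hy Cm hCm
      simp only [elimComb, add_dotProduct, smul_dotProduct, smul_eq_mul]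
      have e1 : (-(Cm.1 k)) * (Cp.1 ⬝ᵥ y) ≤ (-(Cm.1 k)) * Cp.2 :=
        mul_le_mul_of_nonneg_left h1 (by linarith)
      have e2 : (Cp.1 k) * (Cm.1 ⬝ᵥ y) ≤ (Cp.1 k) * Cm.2 :=
        mul_le_mul_of_nonneg_left h2 (le_of_lt hp)
      linarith
  · intro Cp _ Cm _ _ _
    simp [elimComb]; ring
end

section
/- (Completeness of Fourier–Motzkin projection) With P and P_proj as in the soundness statement, for every point y satisfying P_proj there exists a value t ∈ Q such that the point obtained from y by setting coordinate k to t satisfies P. Hence P_proj equals the projection of P parallel to x_k. -/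
open Matrix

theorem fourier_motzkin_projection_complete (n : ℕ) (k : Fin n)
    (S : Finset ((Fin n → ℚ) × ℚ)) :
    ∀ y : Fin n → ℚ,
      (∀ C ∈ S, C.1 k = 0 → C.1 ⬝ᵥ y ≤ C.2) →
      (∀ Cp ∈ S, ∀ Cm ∈ S, 0 < Cp.1 k → Cm.1 k < 0 →
         (elimComb k Cp Cm).1 ⬝ᵥ y ≤ (elimComb k Cp Cm).2) →
      ∃ t : ℚ, ∀ C ∈ S, C.1 ⬝ᵥ (Function.update y k t) ≤ C.2 := by
  intro y h0 hpm
  -- residual bound for each constraint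
  set r : ((Fin n → ℚ) × ℚ) → ℚ := fun C => C.2 - C.1 ⬝ᵥ y + C.1 k * y k with hrdef
  set f : ((Fin n → ℚ) × ℚ) → ℚ := fun C => r C / C.1 k with hfdef
  have hdot : ∀ (t : ℚ) (C : (Fin n → ℚ) × ℚ),
      C.1 ⬝ᵥ (Function.update y k t) = C.1 ⬝ᵥ y + C.1 k * (t - y k) := by
    intro t C
    have : C.1 ⬝ᵥ (Function.update y k t) - C.1 ⬝ᵥ y
        = ∑ i, C.1 i * (Function.update y k t i - y i) := by
      simp [dotProduct, mul_sub, Finset.sum_sub_distrib]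
    rw [Finset.sum_eq_single k] at this
    · simp at this; linarith
    · intro b _ hb; simp [Function.update_of_ne hb]
    · simp
  have key : ∀ (t : ℚ) (C : (Fin n → ℚ) × ℚ), C.1 k * t ≤ r C →
      C.1 ⬝ᵥ (Function.update y k t) ≤ C.2 := by
    intro t C h
    rw [hdot]
    simp only [hrdef] at h
    nlinarith [h]
  -- pairwise inequality between ratios
  have pair : ∀ Cp ∈ S, ∀ Cm ∈ S, 0 < Cp.1 k → Cm.1 k < 0 → f Cm ≤ f Cp := by
    intro Cp hp Cm hm hap ham
    have h := hpm Cp hp Cm hm hap ham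
    simp only [elimComb, add_dotProduct, smul_dotProduct, smul_eq_mul] at h
    have h2 : Cm.1 k * r Cp ≤ Cp.1 k * r Cm := by
      simp only [hrdef]; nlinarith [h]
    show r Cm / Cm.1 k ≤ r Cp / Cp.1 k
    rw [div_le_iff_of_neg ham, div_mul_eq_mul_div, div_le_iff₀ hap]
    nlinarith [h2]
  have hub : ∀ (C : (Fin n → ℚ) × ℚ), C.1 k < 0 → ∀ T : ℚ, f C ≤ T → C.1 k * T ≤ r C := by
    intro C hC T h
    rw [hfdef] at h
    simp only at h
    rw [div_le_iff_of_neg hC] at h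
    linarith [mul_comm (C.1 k) T]
  have hlb : ∀ (C : (Fin n → ℚ) × ℚ), 0 < C.1 k → ∀ T : ℚ, T ≤ f C → C.1 k * T ≤ r C := by
    intro C hC T h
    rw [hfdef] at h
    simp only at h
    rw [le_div_iff₀ hC] at h
    linarith [mul_comm (C.1 k) T]
  classical
  set Sneg := S.filter (fun C => C.1 k < 0) with hSneg
  set Spos := S.filter (fun C => 0 < C.1 k) with hSpos
  by_cases hne : Sneg.Nonempty
  · refine ⟨Sneg.sup' hne f, ?_⟩
    intro C hC
    rcases lt_trichotomy (C.1 k) 0 with ha | ha | ha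
    · exact key _ C (hub C ha _ (Finset.le_sup' f (by simp [hSneg, hC, ha])))
    · rw [hdot, ha]; simpa using h0 C hC ha
    · refine key _ C (hlb C ha _ ?_)
      apply Finset.sup'_le
      intro Cm hCm
      simp only [hSneg, Finset.mem_filter] at hCm
      exact pair C hC Cm hCm.1 ha hCm.2
  · by_cases hpe : Spos.Nonempty
    · refine ⟨Spos.inf' hpe f, ?_⟩
      intro C hC
      rcases lt_trichotomy (C.1 k) 0 with ha | ha | ha
      · exact absurd ⟨C, by simp [hSneg, hC, ha]⟩ hne
      · rw [hdot, ha]; simpa using h0 C hC ha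
      · exact key _ C (hlb C ha _ (Finset.inf'_le f (by simp [hSpos, hC, ha])))
    · refine ⟨0, ?_⟩
      intro C hC
      rcases lt_trichotomy (C.1 k) 0 with ha | ha | ha
      · exact absurd ⟨C, by simp [hSneg, hC, ha]⟩ hne
      · rw [hdot, ha]; simpa using h0 C hC ha
      · exact absurd ⟨C, by simp [hSpos, hC, ha]⟩ hpe
end

section
/- (Certificate extraction for convex hull, P_1 side) Let P̄ be the barycentric system for P_1, P_2 as above, written as a list of constraints on variables (x, x'_1, x'_2, α_1, α_2). Suppose a nonnegative combination F of the constraints of P̄ equals a constraint C mentioning only the x variables. Split F = (F_1, F_2, F_3) according to the three blocks of P̄ (constraints from P_1, from P_2, and the barycentric block). Then P_1 ⊑ C. -/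
open Matrix

/-- Certificate extraction for the convex hull, `P₁` side.
The barycentric system `P̄` over variables `(x, x'₁, x'₂, α₁, α₂)` consists of:
block 1: rows `A₁·x'₁ - α₁·b₁ ≤ 0`; block 2: rows `A₂·x'₂ - α₂·b₂ ≤ 0`;
block 3: equalities `x = x'₁ + x'₂`, `α₁ + α₂ = 1` and inequalities `0 ≤ α₁`, `0 ≤ α₂`.
A certificate `F = (F₁, F₂, F₃)` with `F₃ = (fx, fs, g₁, g₂)` combines these constraints
into a constraint `C = (c·x ≤ d)` mentioning only the `x` variables:
the coefficients on `x` give `fx = c`; on `x'₁` give `A₁ᵀ·F₁ = fx`; on `x'₂` give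
`A₂ᵀ·F₂ = fx`; on `α₁` give `fs - F₁·b₁ - g₁ = 0`; on `α₂` give `fs - F₂·b₂ - g₂ = 0`;
and the bound gives `fs ≤ d`. Then `P₁ ⊑ C`. -/
theorem convex_hull_certificate_P1_side (n m₁ m₂ : ℕ)
    (A₁ : Matrix (Fin m₁) (Fin n) ℚ) (b₁ : Fin m₁ → ℚ)
    (A₂ : Matrix (Fin m₂) (Fin n) ℚ) (b₂ : Fin m₂ → ℚ)
    (c : Fin n → ℚ) (d : ℚ)
    (F₁ : Fin m₁ → ℚ) (F₂ : Fin m₂ → ℚ)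
    (fx : Fin n → ℚ) (fs g₁ g₂ : ℚ)
    (hF₁ : ∀ i, 0 ≤ F₁ i) (hF₂ : ∀ i, 0 ≤ F₂ i)
    (hg₁ : 0 ≤ g₁) (hg₂ : 0 ≤ g₂)
    (hx : fx = c)
    (hx₁ : A₁.vecMul F₁ = fx)
    (hx₂ : A₂.vecMul F₂ = fx)
    (hα₁ : fs - F₁ ⬝ᵥ b₁ - g₁ = 0)
    (hα₂ : fs - F₂ ⬝ᵥ b₂ - g₂ = 0)
    (hbound : fs ≤ d) :
    ∀ x : Fin n → ℚ, A₁.mulVec x ≤ b₁ → c ⬝ᵥ x ≤ d := by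
  intro x hx'
  have h1 : c ⬝ᵥ x = F₁ ⬝ᵥ A₁.mulVec x := by
    rw [dotProduct_mulVec, hx₁, hx]
  have h2 : F₁ ⬝ᵥ A₁.mulVec x ≤ F₁ ⬝ᵥ b₁ := by
    apply Finset.sum_le_sum
    intro i _
    exact mul_le_mul_of_nonneg_left (hx' i) (hF₁ i)
  have h3 : F₁ ⬝ᵥ b₁ = fs - g₁ := by linarith
  linarith
end
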